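/- For β ∈ (1,2), the Beta(2-β, β)-coalescent satisfies Condition A with α = β - 1: there exists a constant C > 0 such that m^{β-1} Σ_{b=m+1}^{∞} 1/λ_b ≤ C for all large m, where λ_b is the total coalescence rate of the Beta(2-β,β)-coalescent. -/

import Mathlib

/-!
Only binary mergers are needed: `λ_b ≥ C(b,2) λ_{b,2}` with `λ_{b,2} = ∫ (1-x)^{b-2} Λ(dx)`.
On `[0, 1/(2b)]` the integrand is at least `1/2` (Bernoulli), and near `0` the Beta density is
comparable to `x^{1-β}`, so `Λ[0, a] ≳ a^{2-β}`; hence `λ_b ≳ b² (1/b)^{2-β} = b^β`. Comparing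
`Σ_{b>m} b^{-β}` with `∫_m^∞ x^{-β} dx = m^{1-β}/(β-1)` then gives
`m^{β-1} Σ_{b>m} 1/λ_b ≤ 1/(c(β-1))` when `λ_b ≥ c b^β`.
-/

open MeasureTheory

/-- The coalescence rate `λ_{b,k} = ∫_{[0,1]} x^{k-2}(1-x)^{b-k} Λ(dx)`. -/
noncomputable def coalRate (Λ : Measure ℝ) (b k : ℕ) : ℝ :=
  ∫ x in Set.Icc (0:ℝ) 1, x ^ (k - 2) * (1 - x) ^ (b - k) ∂Λ

/-- The total coalescence rate `λ_n = Σ_{k=2}^n C(n,k) λ_{n,k}`. -/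
noncomputable def totalRate (Λ : Measure ℝ) (n : ℕ) : ℝ :=
  ∑ k ∈ Finset.Icc 2 n, (n.choose k : ℝ) * coalRate Λ n k

/-- The Beta(2-β, β) measure on `[0,1]`, with density
`Γ(2)/(Γ(2-β)Γ(β)) x^{1-β}(1-x)^{β-1}` w.r.t. Lebesgue measure. -/
noncomputable def betaMeasure (β : ℝ) : Measure ℝ :=
  volume.withDensity fun x =>
    Set.indicator (Set.Icc (0:ℝ) 1)
      (fun x => ENNReal.ofReal
        (Real.Gamma 2 / (Real.Gamma (2 - β) * Real.Gamma β) *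
          x ^ ((1 : ℝ) - β) * (1 - x) ^ (β - 1))) x

open Real Set

theorem sum_range_rpow_neg_le {p x : ℝ} (hp : 1 < p) (hx : 0 < x) (N : ℕ) :
    ∑ i ∈ Finset.range N, (x + (i + 1 : ℕ)) ^ (-p) ≤ x ^ (1 - p) / (p - 1) := by
  have hanti : AntitoneOn (fun t : ℝ => t ^ (-p)) (Icc x (x + N)) := fun s hs t _ hst =>
    rpow_le_rpow_of_nonpos (hx.trans_le hs.1) hst (by linarith)
  have hzero : (0 : ℝ) ∉ uIcc x (x + N) := by
    rw [uIcc_of_le (by simp)]; exact fun h => hx.not_ge h.1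
  calc ∑ i ∈ Finset.range N, (x + (i + 1 : ℕ)) ^ (-p)
      ≤ ∫ t in x..x + N, t ^ (-p) := hanti.sum_le_integral
    _ = (x ^ (1 - p) - (x + N) ^ (1 - p)) / (p - 1) := by
        rw [integral_rpow (Or.inr ⟨by linarith, hzero⟩), neg_add_eq_sub, ← neg_sub p 1,
          div_neg, ← neg_div, neg_sub]
    _ ≤ x ^ (1 - p) / (p - 1) := by
        gcongr
        exact sub_le_self _ (rpow_nonneg (by positivity) _)

theorem rpow_mul_tsum_inv_le_of_mul_rpow_le {p c : ℝ} (hp : 1 < p) (hc : 0 < c) {r : ℕ → ℝ}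
    (hr : ∀ b : ℕ, 2 ≤ b → c * (b : ℝ) ^ p ≤ r b) {m : ℕ} (hm : 1 ≤ m) :
    (m : ℝ) ^ (p - 1) * ∑' b, 1 / r (m + 1 + b) ≤ 1 / (c * (p - 1)) := by
  have hm0 : (0 : ℝ) < m := by exact_mod_cast hm
  have hterm : ∀ b, 1 / r (m + 1 + b) ≤ c⁻¹ * ((m : ℝ) + (b + 1 : ℕ)) ^ (-p) := by
    intro b
    have hpos : 0 < c * ((m + 1 + b : ℕ) : ℝ) ^ p := by positivity
    calc 1 / r (m + 1 + b) ≤ 1 / (c * ((m + 1 + b : ℕ) : ℝ) ^ p) :=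
          one_div_le_one_div_of_le hpos (hr _ (by omega))
      _ = c⁻¹ * ((m : ℝ) + (b + 1 : ℕ)) ^ (-p) := by
          rw [rpow_neg (by positivity), one_div, mul_inv]; push_cast; ring_nf
  have htsum : ∑' b, 1 / r (m + 1 + b) ≤ c⁻¹ * ((m : ℝ) ^ (1 - p) / (p - 1)) := by
    refine tsum_le_of_sum_range_le (fun b => ?_) fun N => ?_
    · exact (one_div_pos.2 ((hr _ (by omega)).trans_lt' (by positivity))).le
    calc ∑ b ∈ Finset.range N, 1 / r (m + 1 + b)
        ≤ ∑ b ∈ Finset.range N, c⁻¹ * ((m : ℝ) + (b + 1 : ℕ)) ^ (-p) :=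
          Finset.sum_le_sum fun b _ => hterm b
      _ ≤ _ := by rw [← Finset.mul_sum]; gcongr; exact sum_range_rpow_neg_le hp hm0 N
  calc (m : ℝ) ^ (p - 1) * ∑' b, 1 / r (m + 1 + b)
      ≤ (m : ℝ) ^ (p - 1) * (c⁻¹ * ((m : ℝ) ^ (1 - p) / (p - 1))) := by gcongr
    _ = 1 / (c * (p - 1)) := by
        rw [show (1 : ℝ) - p = -(p - 1) by ring, rpow_neg hm0.le]
        field_simp

section
variable (Λ : Measure ℝ)

theorem coalRate_nonneg (b k : ℕ) : 0 ≤ coalRate Λ b k :=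
  setIntegral_nonneg measurableSet_Icc fun _ hx =>
    mul_nonneg (pow_nonneg hx.1 _) (pow_nonneg (sub_nonneg.2 hx.2) _)

theorem choose_two_mul_coalRate_two_le_totalRate {b : ℕ} (hb : 2 ≤ b) :
    (b.choose 2 : ℝ) * coalRate Λ b 2 ≤ totalRate Λ b :=
  Finset.single_le_sum (f := fun k => (b.choose k : ℝ) * coalRate Λ b k)
    (fun k _ => mul_nonneg (Nat.cast_nonneg _) (coalRate_nonneg Λ b k))
    (Finset.mem_Icc.2 ⟨le_rfl, hb⟩)

theorem measureReal_Icc_le_two_mul_coalRate_two [IsFiniteMeasure Λ] {b : ℕ} {a : ℝ}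
    (ha : a ≤ 1) (hba : (b : ℝ) * a ≤ 1 / 2) :
    Λ.real (Icc 0 a) ≤ 2 * coalRate Λ b 2 := by
  have hcoal : coalRate Λ b 2 = ∫ x in Icc (0 : ℝ) 1, (1 - x) ^ (b - 2) ∂Λ := by
    simp [coalRate]
  have hint : IntegrableOn (fun x : ℝ => (1 - x) ^ (b - 2)) (Icc 0 1) Λ := by
    refine Integrable.of_bound (by fun_prop) 1 ((ae_restrict_iff' measurableSet_Icc).2 ?_)
    refine Filter.Eventually.of_forall fun x hx => ?_
    rw [norm_pow, Real.norm_of_nonneg (sub_nonneg.2 hx.2)]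
    exact pow_le_one₀ (sub_nonneg.2 hx.2) (by linarith [hx.1])
  have hhalf : ∀ x ∈ Icc 0 a, (1 : ℝ) / 2 ≤ (1 - x) ^ (b - 2) := by
    intro x hx
    have hbern := one_add_mul_le_pow (a := -x) (by linarith [hx.2]) (b - 2)
    have hcast : ((b - 2 : ℕ) : ℝ) * x ≤ b * a :=
      mul_le_mul (by exact_mod_cast Nat.sub_le b 2) hx.2 hx.1 (Nat.cast_nonneg b)
    rw [← sub_eq_add_neg] at hbern
    linarith
  calc Λ.real (Icc 0 a) = 2 * (Λ.real (Icc 0 a) • (1 / 2 : ℝ)) := by rw [smul_eq_mul]; ring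
    _ ≤ 2 * ∫ x in Icc 0 a, (1 - x) ^ (b - 2) ∂Λ := by
        gcongr
        exact setIntegral_ge_of_const_le measurableSet_Icc (measure_ne_top Λ _) hhalf
          (hint.mono_set (Icc_subset_Icc_right ha))
    _ ≤ 2 * coalRate Λ b 2 := by
        rw [hcoal]
        gcongr 2 * ?_
        exact setIntegral_mono_set hint
          ((ae_restrict_iff' measurableSet_Icc).2 (Filter.Eventually.of_forall
            fun x hx => pow_nonneg (sub_nonneg.2 hx.2) _))
          (Icc_subset_Icc_right ha).eventuallyLE

theorem mul_rpow_le_totalRate [IsFiniteMeasure Λ] {p κ : ℝ} (hκ : 0 ≤ κ)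
    (hΛ : ∀ a : ℝ, 0 ≤ a → a ≤ 1 / 4 → κ * a ^ (2 - p) ≤ Λ.real (Icc 0 a))
    {b : ℕ} (hb : 2 ≤ b) :
    κ / (8 * 2 ^ (2 - p)) * (b : ℝ) ^ p ≤ totalRate Λ b := by
  have hb2 : (2 : ℝ) ≤ b := by exact_mod_cast hb
  have hb0 : (0 : ℝ) < b := by linarith
  set a : ℝ := (2 * b)⁻¹ with ha_def
  have ha0 : 0 ≤ a := by positivity
  have ha4 : a ≤ 1 / 4 := by
    rw [ha_def, ← one_div]; exact one_div_le_one_div_of_le (by norm_num) (by linarith)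
  have hba : (b : ℝ) * a = 1 / 2 := by rw [ha_def]; field_simp
  have hchoose : (b : ℝ) ^ 2 / 4 ≤ (b.choose 2 : ℝ) := by
    rw [Nat.cast_choose_two]; nlinarith
  have hbp : (b : ℝ) ^ p * (b : ℝ) ^ (2 - p) = (b : ℝ) ^ 2 := by
    rw [← rpow_add hb0, add_sub_cancel, rpow_two]
  calc κ / (8 * 2 ^ (2 - p)) * (b : ℝ) ^ p = (b : ℝ) ^ 2 / 4 * (κ * a ^ (2 - p) / 2) := by
        rw [ha_def, inv_rpow (by positivity), mul_rpow zero_le_two hb0.le, ← hbp]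
        field_simp; ring
    _ ≤ (b.choose 2 : ℝ) * (Λ.real (Icc 0 a) / 2) := by
        gcongr
        exact hΛ a ha0 ha4
    _ ≤ (b.choose 2 : ℝ) * coalRate Λ b 2 := by
        gcongr
        linarith [measureReal_Icc_le_two_mul_coalRate_two Λ (by linarith) hba.le]
    _ ≤ totalRate Λ b := choose_two_mul_coalRate_two_le_totalRate Λ hb

end

theorem integrableOn_Icc_zero_rpow {r : ℝ} (hr : -1 < r) (a : ℝ) :
    IntegrableOn (fun x : ℝ => x ^ r) (Icc 0 a) := by
  rcases lt_or_ge a 0 with ha | ha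
  · rw [Icc_eq_empty (not_le.2 ha)]; exact integrableOn_empty
  · rw [integrableOn_Icc_iff_integrableOn_Ioc, ← intervalIntegrable_iff_integrableOn_Ioc_of_le ha]
    exact intervalIntegral.intervalIntegrable_rpow' hr

theorem integral_Icc_zero_rpow {r a : ℝ} (hr : -1 < r) (ha : 0 ≤ a) :
    ∫ x in Icc 0 a, x ^ r = a ^ (r + 1) / (r + 1) := by
  rw [integral_Icc_eq_integral_Ioc, ← intervalIntegral.integral_of_le ha,
    integral_rpow (Or.inl hr), zero_rpow (by linarith), sub_zero]

section
variable {β : ℝ}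

theorem betaMeasure_apply {s : Set ℝ} (hs : MeasurableSet s) :
    betaMeasure β s = ∫⁻ x in s ∩ Icc 0 1, ENNReal.ofReal
      (Real.Gamma 2 / (Real.Gamma (2 - β) * Real.Gamma β) *
        x ^ ((1 : ℝ) - β) * (1 - x) ^ (β - 1)) := by
  rw [betaMeasure, withDensity_apply _ hs, lintegral_indicator measurableSet_Icc,
    Measure.restrict_restrict measurableSet_Icc, inter_comm]

variable (hβ1 : 1 < β) (hβ2 : β < 2)
include hβ1 hβ2

theorem betaMeasure_normalizer_pos : 0 < Real.Gamma 2 / (Real.Gamma (2 - β) * Real.Gamma β) :=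
  div_pos (Gamma_pos_of_pos two_pos)
    (mul_pos (Gamma_pos_of_pos (by linarith)) (Gamma_pos_of_pos (by linarith)))

theorem isFiniteMeasure_betaMeasure : IsFiniteMeasure (betaMeasure β) := by
  set c := Real.Gamma 2 / (Real.Gamma (2 - β) * Real.Gamma β)
  have hc := betaMeasure_normalizer_pos hβ1 hβ2
  refine ⟨?_⟩
  rw [betaMeasure_apply MeasurableSet.univ, univ_inter]
  refine lt_of_le_of_lt (setLIntegral_mono' measurableSet_Icc fun x hx => ?_)
    ((integrableOn_Icc_zero_rpow (r := 1 - β) (by linarith) 1).const_mul c).lintegral_lt_top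
  refine ENNReal.ofReal_le_ofReal
    (mul_le_of_le_one_right (mul_nonneg hc.le (rpow_nonneg hx.1 _)) ?_)
  exact rpow_le_one (sub_nonneg.2 hx.2) (by linarith [hx.1]) (by linarith)

theorem mul_rpow_le_betaMeasure_real_Icc {a : ℝ} (ha0 : 0 ≤ a) (ha : a ≤ 1 / 2) :
    Real.Gamma 2 / (Real.Gamma (2 - β) * Real.Gamma β) / (2 * (2 - β)) * a ^ (2 - β)
      ≤ (betaMeasure β).real (Icc 0 a) := by
  set c := Real.Gamma 2 / (Real.Gamma (2 - β) * Real.Gamma β)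
  have hc := betaMeasure_normalizer_pos hβ1 hβ2
  have := isFiniteMeasure_betaMeasure hβ1 hβ2
  have hrpow := integrableOn_Icc_zero_rpow (r := 1 - β) (by linarith) a
  have hint : ∫ x in Icc 0 a, c / 2 * x ^ (1 - β) = c / (2 * (2 - β)) * a ^ (2 - β) := by
    rw [integral_const_mul, integral_Icc_zero_rpow (by linarith) ha0,
      show 1 - β + 1 = 2 - β by ring]
    field_simp
  rw [measureReal_def, ← ENNReal.ofReal_le_iff_le_toReal (measure_ne_top _ _), ← hint,
    ofReal_integral_eq_lintegral_ofReal (hrpow.const_mul _)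
      ((ae_restrict_iff' measurableSet_Icc).2 (Filter.Eventually.of_forall fun x hx =>
        mul_nonneg (by positivity) (rpow_nonneg hx.1 _))),
    betaMeasure_apply measurableSet_Icc, inter_eq_left.2 (Icc_subset_Icc_right (by linarith))]
  refine setLIntegral_mono' measurableSet_Icc fun x hx => ENNReal.ofReal_le_ofReal ?_
  have hhalf : 1 / 2 ≤ (1 - x) ^ (β - 1) :=
    calc 1 / 2 ≤ 1 - x := by linarith [hx.2]
      _ = (1 - x) ^ (1 : ℝ) := (rpow_one _).symm
      _ ≤ (1 - x) ^ (β - 1) :=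
        rpow_le_rpow_of_exponent_ge (by linarith [hx.2]) (by linarith [hx.1]) (by linarith)
  have hx0 := mul_nonneg hc.le (rpow_nonneg hx.1 (1 - β))
  nlinarith
end

theorem exists_mul_rpow_le_totalRate_betaMeasure {β : ℝ} (hβ1 : 1 < β) (hβ2 : β < 2) :
    ∃ c > 0, ∀ b : ℕ, 2 ≤ b → c * (b : ℝ) ^ β ≤ totalRate (betaMeasure β) b := by
  have := isFiniteMeasure_betaMeasure hβ1 hβ2
  have hκ := div_pos (betaMeasure_normalizer_pos hβ1 hβ2) (by linarith : (0 : ℝ) < 2 * (2 - β))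
  exact ⟨_, by positivity, fun b hb => mul_rpow_le_totalRate _ hκ.le
    (fun a ha0 ha => mul_rpow_le_betaMeasure_real_Icc hβ1 hβ2 ha0 (by linarith)) hb⟩

/-- For `β ∈ (1,2)`, the Beta(2-β,β)-coalescent satisfies Condition A with `α = β - 1`:
there is `C > 0` such that `m^{β-1} Σ_{b=m+1}^∞ 1/λ_b ≤ C` for all large `m`. -/
theorem beta_coalescent_conditionA (β : ℝ) (hβ : β ∈ Set.Ioo (1:ℝ) 2) :
    ∃ C : ℝ, 0 < C ∧ ∃ M : ℕ, ∀ m : ℕ, M ≤ m →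
      (m : ℝ) ^ (β - 1) * ∑' b : ℕ, 1 / totalRate (betaMeasure β) (m + 1 + b) ≤ C := by
  obtain ⟨hβ1, hβ2⟩ := hβ
  obtain ⟨c, hc, hrate⟩ := exists_mul_rpow_le_totalRate_betaMeasure hβ1 hβ2
  exact ⟨1 / (c * (β - 1)), by have := sub_pos.2 hβ1; positivity, 1,
    fun m hm => rpow_mul_tsum_inv_le_of_mul_rpow_le hβ1 hc hrate hm⟩
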